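/- Let X_N be an N-dimensional linear subspace of L_∞(Ω,μ) satisfying ‖f‖_∞ ≤ (K₁·N)^{1/2}·‖f‖₂ for all f ∈ X_N, where K₁ ≥ 1. Then for all 1 ≤ p ≤ 2 and all q with p < q ≤ ∞, every f ∈ X_N satisfies the Nikol'skii inequality ‖f‖_q ≤ (K₁·N)^{1/p − 1/q}·‖f‖_p. In particular, ‖f‖_∞ ≤ (K₁·N)^{1/p}·‖f‖_p for all f ∈ X_N and all 1 ≤ p ≤ 2. -/
import Mathlib

open MeasureTheory Real

noncomputable def Lnorm {Ω : Type} [MeasurableSpace Ω] (μ : Measure Ω) (q : ℝ)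
    (f : Ω → ℝ) : ℝ := (∫ x, |f x| ^ q ∂μ) ^ (1 / q)

noncomputable def supNorm {Ω : Type} (f : Ω → ℝ) : ℝ := ⨆ x, |f x|

/-- `A` can be covered by `n` closed balls of radius `ε` (with arbitrary centers) in the
metric induced by the "norm" `nf`. -/
def CoveredBy {Ω : Type} (A : Set (Ω → ℝ)) (nf : (Ω → ℝ) → ℝ) (ε : ℝ) (n : ℕ) : Prop :=
  ∃ g : Fin n → Ω → ℝ, ∀ f ∈ A, ∃ j, nf (f - g j) ≤ ε

lemma integ_abs_rpow {Ω : Type} [MeasurableSpace Ω] (μ : Measure Ω) [IsProbabilityMeasure μ]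
    (f : Ω → ℝ) (hm : Measurable f) (M : ℝ) (hM : ∀ x, |f x| ≤ M) (r : ℝ) (hr : 0 ≤ r) :
    Integrable (fun x => |f x| ^ r) μ := by
  apply Integrable.mono' (integrable_const (M ^ r))
  · exact (by fun_prop : Measurable (fun x => |f x| ^ r)).aestronglyMeasurable
  · filter_upwards with x
    rw [norm_eq_abs, abs_of_nonneg (rpow_nonneg (abs_nonneg _) _)]
    exact rpow_le_rpow (abs_nonneg _) (hM x) hr

lemma key_ineq {Ω : Type} [MeasurableSpace Ω] (μ : Measure Ω) [IsProbabilityMeasure μ]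
    (f : Ω → ℝ) (hm : Measurable f) (M : ℝ) (hM : ∀ x, |f x| ≤ M)
    (S : ℝ) (hS : ∀ x, |f x| ≤ S) (a b : ℝ) (ha : 0 < a) (hab : a ≤ b) :
    ∫ x, |f x| ^ b ∂μ ≤ S ^ (b - a) * ∫ x, |f x| ^ a ∂μ := by
  rw [← integral_const_mul]
  apply integral_mono (integ_abs_rpow μ f hm M hM b (by linarith))
    ((integ_abs_rpow μ f hm M hM a ha.le).const_mul _)
  intro x
  have hb : |f x| ^ b = |f x| ^ (b - a) * |f x| ^ a := by
    rw [← rpow_add' (abs_nonneg _) (by simp; linarith)]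
    ring_nf
  simp only []
  rw [hb]
  exact mul_le_mul_of_nonneg_right
    (rpow_le_rpow (abs_nonneg _) (hS x) (by linarith))
    (rpow_nonneg (abs_nonneg _) _)

/-- the condition `‖f‖_∞ ≤ (K₁ N)^{1/2} ‖f‖₂` implies the Nikol'skii
inequalities `‖f‖_q ≤ (K₁ N)^{1/p - 1/q} ‖f‖_p` for all `1 ≤ p ≤ 2 < q ≤ ∞` (the case
`q = ∞` is stated separately with the sup norm). -/
theorem stmt10 (Ω : Type) [MeasurableSpace Ω] (μ : Measure Ω) [IsProbabilityMeasure μ]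
    (N : ℕ) (X : Submodule ℝ (Ω → ℝ)) (hdim : Module.finrank ℝ X = N)
    (hmeas : ∀ f ∈ X, Measurable f) (hbdd : ∀ f ∈ X, ∃ M : ℝ, ∀ x, |f x| ≤ M)
    (K₁ : ℝ) (hK : 1 ≤ K₁)
    (hnik : ∀ f ∈ X, supNorm f ≤ (K₁ * N) ^ ((1 : ℝ) / 2) * Lnorm μ 2 f) :
    ∀ p : ℝ, 1 ≤ p → p ≤ 2 →
      (∀ q : ℝ, p < q →
        ∀ f ∈ X, Lnorm μ q f ≤ (K₁ * N) ^ (1 / p - 1 / q) * Lnorm μ p f) ∧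
      (∀ f ∈ X, supNorm f ≤ (K₁ * N) ^ (1 / p) * Lnorm μ p f) := by
  intro p hp1 hp2
  have hp0 : 0 < p := by linarith
  have hC : (0:ℝ) ≤ K₁ * N := by positivity
  have hΩ : Nonempty Ω := by
    by_contra h
    rw [not_nonempty_iff] at h
    have h1 : μ Set.univ = 1 := measure_univ
    rw [Set.univ_eq_empty_iff.mpr h, measure_empty] at h1
    simp at h1
  have step1 : ∀ f ∈ X, supNorm f ≤ (K₁ * N) ^ (1/p) * Lnorm μ p f := by
    intro f hf
    obtain ⟨M, hM⟩ := hbdd f hf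
    have hm := hmeas f hf
    have hba : BddAbove (Set.range fun x => |f x|) := ⟨M, by rintro y ⟨x, rfl⟩; exact hM x⟩
    have hfS : ∀ x, |f x| ≤ supNorm f := fun x => le_ciSup hba x
    have hS0 : 0 ≤ supNorm f := le_trans (abs_nonneg _) (hfS hΩ.some)
    have hIp0 : 0 ≤ ∫ x, |f x| ^ p ∂μ :=
      integral_nonneg fun x => rpow_nonneg (abs_nonneg _) _
    simp only [Lnorm]
    set S := supNorm f with hSdef
    set I := ∫ x, |f x| ^ p ∂μ with hIdef
    have hkey := key_ineq μ f hm M hM S hfS p 2 hp0 hp2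
    have hL2 : Lnorm μ 2 f ≤ (S ^ (2 - p) * I) ^ ((1:ℝ)/2) := by
      simp only [Lnorm]
      exact rpow_le_rpow (integral_nonneg fun x => rpow_nonneg (abs_nonneg _) _) hkey
        (by norm_num)
    have h2 : S ≤ (K₁*N) ^ ((1:ℝ)/2) * (S ^ ((2-p)/2) * I ^ ((1:ℝ)/2)) := by
      refine le_trans (hnik f hf) ?_
      have he : (S ^ (2 - p) * I) ^ ((1:ℝ)/2) = S ^ ((2-p)/2) * I ^ ((1:ℝ)/2) := by
        rw [mul_rpow (rpow_nonneg hS0 _) hIp0, ← rpow_mul hS0]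
        ring_nf
      rw [← he]
      exact mul_le_mul_of_nonneg_left hL2 (rpow_nonneg hC _)
    rcases eq_or_lt_of_le hS0 with h0 | hSpos
    · rw [← h0]
      exact mul_nonneg (rpow_nonneg hC _) (rpow_nonneg hIp0 _)
    · have hS2p : 0 < S ^ ((2-p)/2) := rpow_pos_of_pos hSpos _
      have h3 : S ^ (p/2) ≤ (K₁*N) ^ ((1:ℝ)/2) * I ^ ((1:ℝ)/2) := by
        have hmul : S ^ (p/2) * S ^ ((2-p)/2)
            ≤ ((K₁*N) ^ ((1:ℝ)/2) * I ^ ((1:ℝ)/2)) * S ^ ((2-p)/2) := by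
          rw [← rpow_add hSpos, show p/2 + (2-p)/2 = 1 by ring, rpow_one]
          calc S ≤ _ := h2
            _ = _ := by ring
        exact le_of_mul_le_mul_right hmul hS2p
      have h4 : S ≤ ((K₁*N) ^ ((1:ℝ)/2) * I ^ ((1:ℝ)/2)) ^ (2/p) := by
        have h5 := rpow_le_rpow (rpow_nonneg hSpos.le _) h3 (by positivity : (0:ℝ) ≤ 2/p)
        rwa [← rpow_mul hSpos.le, show p/2 * (2/p) = 1 by field_simp, rpow_one] at h5
      calc S ≤ _ := h4
        _ = (K₁*N) ^ (1/p) * I ^ (1/p) := by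
          rw [mul_rpow (rpow_nonneg hC _) (rpow_nonneg hIp0 _), ← rpow_mul hC,
            ← rpow_mul hIp0, show (1:ℝ)/2 * (2/p) = 1/p by field_simp]
  refine ⟨?_, step1⟩
  intro q hq f hf
  have hq0 : 0 < q := by linarith
  obtain ⟨M, hM⟩ := hbdd f hf
  have hm := hmeas f hf
  have hba : BddAbove (Set.range fun x => |f x|) := ⟨M, by rintro y ⟨x, rfl⟩; exact hM x⟩
  have hfS : ∀ x, |f x| ≤ supNorm f := fun x => le_ciSup hba x
  have hS0 : 0 ≤ supNorm f := le_trans (abs_nonneg _) (hfS hΩ.some)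
  have hIp0 : 0 ≤ ∫ x, |f x| ^ p ∂μ :=
    integral_nonneg fun x => rpow_nonneg (abs_nonneg _) _
  have hIq0 : 0 ≤ ∫ x, |f x| ^ q ∂μ :=
    integral_nonneg fun x => rpow_nonneg (abs_nonneg _) _
  have hs1 : supNorm f ≤ (K₁*N) ^ (1/p) * (∫ x, |f x| ^ p ∂μ) ^ (1/p) := step1 f hf
  simp only [Lnorm]
  set S := supNorm f with hSdef
  set I := ∫ x, |f x| ^ p ∂μ with hIdef
  have hkey := key_ineq μ f hm M hM S hfS p q hp0 hq.le
  rcases eq_or_lt_of_le hIp0 with hI0 | hIpos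
  · -- I = 0 : both sides reduce
    have hSq : S ^ (q - p) ≤ ((K₁*N) ^ (1/p) * I ^ (1/p)) ^ (q-p) :=
      rpow_le_rpow hS0 hs1 (by linarith)
    have hz : ((K₁*N) ^ (1/p) * I ^ (1/p)) ^ (q-p) = 0 := by
      rw [← hI0, zero_rpow (by positivity : (1:ℝ)/p ≠ 0), mul_zero,
        zero_rpow (by intro h; linarith [h] : q - p ≠ 0)]
    have hIq : ∫ x, |f x| ^ q ∂μ ≤ 0 := by
      calc ∫ x, |f x| ^ q ∂μ ≤ S ^ (q-p) * I := hkey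
        _ = 0 := by rw [← hI0, mul_zero]
    have : (∫ x, |f x| ^ q ∂μ) = 0 := le_antisymm hIq hIq0
    rw [this, zero_rpow (by positivity : (1:ℝ)/q ≠ 0), ← hI0,
      zero_rpow (by positivity : (1:ℝ)/p ≠ 0), mul_zero]
  · have hSq : S ^ (q - p) ≤ ((K₁*N) ^ (1/p) * I ^ (1/p)) ^ (q-p) :=
      rpow_le_rpow hS0 hs1 (by linarith)
    have hfull : ∫ x, |f x| ^ q ∂μ ≤ ((K₁*N) ^ (1/p) * I ^ (1/p)) ^ (q-p) * I := by
      calc ∫ x, |f x| ^ q ∂μ ≤ S ^ (q-p) * I := hkey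
        _ ≤ _ := mul_le_mul_of_nonneg_right hSq hIpos.le
    have hmono := rpow_le_rpow hIq0 hfull (by positivity : (0:ℝ) ≤ 1/q)
    refine le_trans hmono (le_of_eq ?_)
    have hpne : p ≠ 0 := hp0.ne'
    have hqne : q ≠ 0 := hq0.ne'
    rw [mul_rpow (rpow_nonneg hC _) (rpow_nonneg hIp0 _), ← rpow_mul hC, ← rpow_mul hIp0,
      mul_assoc, ← rpow_add_one hIpos.ne',
      mul_rpow (rpow_nonneg hC _) (rpow_nonneg hIp0 _), ← rpow_mul hC, ← rpow_mul hIp0,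
      show (1/p * (q-p)) * (1/q) = 1/p - 1/q by field_simp; try ring
      ,
      show (1/p * (q-p) + 1) * (1/q) = 1/p by field_simp; try ring]
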